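/- arXiv:2007.11729 — 6 statements merged into one kernel-verified Lean document; each statement's English description precedes it below -/
import Mathlib

section
/- Let X be a type and f : X → X → ℝ, s : X → ℝ, t : X → ℝ satisfy f x y ≤ s y − t x for all x, y in X, and s x ≤ t x for all x in X. If a, b in X satisfy f a b + f b a = 0, then t a = s a and t b = s b. -/
theorem reversible_implies_coarse_grained {X : Type*} (f : X → X → ℝ)
    (s t : X → ℝ) (hbound : ∀ x y : X, f x y ≤ s y - t x)
    (hst : ∀ x : X, s x ≤ t x)
    (a b : X) (hrev : f a b + f b a = 0) :
    t a = s a ∧ t b = s b := by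
  have h1 := hbound a b
  have h2 := hbound b a
  have h3 := hst a
  have h4 := hst b
  constructor <;> linarith
end

section
/- Let (X, μ) and (Y, ν) be σ-finite measure spaces and let ρ : X × Y → ℝ be a probability density with respect to the product measure μ ⊗ ν such that ρ·log ρ is integrable. Define the marginal densities ρ_A(x) = ∫ ρ(x,y) dν(y) and ρ_B(y) = ∫ ρ(x,y) dμ(x), and assume ρ_A·log ρ_A and ρ_B·log ρ_B are integrable. Then S[ρ] ≤ S[ρ_A] + S[ρ_B], where S denotes the Gibbs entropy with respect to the relevant measure. -/
open MeasureTheory Real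

/-- Subadditivity of the Gibbs entropy: `S[ρ] ≤ S[ρ_A] + S[ρ_B]`. -/
theorem gibbs_entropy_subadditive
    {X Y : Type*} [MeasurableSpace X] [MeasurableSpace Y]
    (μ : Measure X) (ν : Measure Y) [SigmaFinite μ] [SigmaFinite ν]
    (ρ : X × Y → ℝ) (hρm : Measurable ρ) (hρ0 : ∀ p, 0 ≤ ρ p)
    (hρ1 : ∫ p, ρ p ∂(μ.prod ν) = 1)
    (hent : Integrable (fun p => ρ p * log (ρ p)) (μ.prod ν))
    (ρA : X → ℝ) (hρA : ∀ x, ρA x = ∫ y, ρ (x, y) ∂ν)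
    (ρB : Y → ℝ) (hρB : ∀ y, ρB y = ∫ x, ρ (x, y) ∂μ)
    (hentA : Integrable (fun x => ρA x * log (ρA x)) μ)
    (hentB : Integrable (fun y => ρB y * log (ρB y)) ν) :
    -(∫ p, ρ p * log (ρ p) ∂(μ.prod ν)) ≤
      -(∫ x, ρA x * log (ρA x) ∂μ) + -(∫ y, ρB y * log (ρB y) ∂ν) := by
  -- ρ is integrable (its integral is 1 ≠ 0)
  have hρint : Integrable ρ (μ.prod ν) := by
    by_contra h
    rw [integral_undef h] at hρ1
    norm_num at hρ1
  -- measurability of the marginals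
  have hρAm : StronglyMeasurable ρA := by
    have : StronglyMeasurable fun x => ∫ y, ρ (x, y) ∂ν :=
      hρm.stronglyMeasurable.integral_prod_right'
    simpa [funext hρA] using this
  have hρBm : StronglyMeasurable ρB := by
    have : StronglyMeasurable fun y => ∫ x, ρ (x, y) ∂μ :=
      hρm.stronglyMeasurable.integral_prod_left'
    simpa [funext hρB] using this
  -- nonnegativity of marginals
  have hρA0 : ∀ x, 0 ≤ ρA x := fun x => (hρA x) ▸ integral_nonneg fun y => hρ0 _
  have hρB0 : ∀ y, 0 ≤ ρB y := fun y => (hρB y) ▸ integral_nonneg fun x => hρ0 _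
  -- integrability of marginals
  have hρAint : Integrable ρA μ := by
    have := hρint.integral_prod_left
    simpa [funext hρA] using this
  have hρBint : Integrable ρB ν := by
    have := hρint.swap.integral_prod_left
    simpa [funext hρB] using this
  -- integrals of marginals are 1
  have hρA1 : ∫ x, ρA x ∂μ = 1 := by
    rw [funext hρA, ← integral_prod _ hρint, hρ1]
  have hρB1 : ∫ y, ρB y ∂ν = 1 := by
    rw [funext hρB, ← integral_prod_symm _ hρint, hρ1]
  -- integrability of p ↦ ρ p * log (ρA p.1)
  have hFAm : AEStronglyMeasurable (fun p : X × Y => ρ p * log (ρA p.1)) (μ.prod ν) :=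
    (hρm.mul ((hρAm.measurable.comp measurable_fst).log)).aestronglyMeasurable
  have hFAint : Integrable (fun p : X × Y => ρ p * log (ρA p.1)) (μ.prod ν) := by
    rw [integrable_prod_iff hFAm]
    constructor
    · filter_upwards [hρint.prod_right_ae] with x hx
      exact hx.mul_const _
    · have heq : (fun x => ∫ y, ‖ρ (x, y) * log (ρA x)‖ ∂ν)
          = fun x => ρA x * |log (ρA x)| := by
        funext x
        have : (fun y => ‖ρ (x, y) * log (ρA x)‖)
            = fun y => ρ (x, y) * |log (ρA x)| := by
          funext y
          rw [Real.norm_eq_abs, abs_mul, abs_of_nonneg (hρ0 _)]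
        rw [this, integral_mul_const, ← hρA x]
      rw [heq]
      have : Integrable (fun x => |ρA x * log (ρA x)|) μ := hentA.abs
      refine this.congr ?_
      filter_upwards with x
      rw [abs_mul, abs_of_nonneg (hρA0 x)]
  have hFAval : ∫ p, ρ p * log (ρA p.1) ∂(μ.prod ν) = ∫ x, ρA x * log (ρA x) ∂μ := by
    rw [integral_prod _ hFAint]
    congr 1 with x
    simp only
    rw [integral_mul_const, ← hρA x]
  -- integrability of p ↦ ρ p * log (ρB p.2)
  have hFBm : AEStronglyMeasurable (fun p : X × Y => ρ p * log (ρB p.2)) (μ.prod ν) :=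
    (hρm.mul ((hρBm.measurable.comp measurable_snd).log)).aestronglyMeasurable
  have hFBint : Integrable (fun p : X × Y => ρ p * log (ρB p.2)) (μ.prod ν) := by
    rw [integrable_prod_iff' hFBm]
    constructor
    · filter_upwards [hρint.prod_left_ae] with y hy
      exact hy.mul_const _
    · have heq : (fun y => ∫ x, ‖ρ (x, y) * log (ρB y)‖ ∂μ)
          = fun y => ρB y * |log (ρB y)| := by
        funext y
        have : (fun x => ‖ρ (x, y) * log (ρB y)‖)
            = fun x => ρ (x, y) * |log (ρB y)| := by
          funext x
          rw [Real.norm_eq_abs, abs_mul, abs_of_nonneg (hρ0 _)]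
        rw [this, integral_mul_const, ← hρB y]
      rw [heq]
      have : Integrable (fun y => |ρB y * log (ρB y)|) ν := hentB.abs
      refine this.congr ?_
      filter_upwards with y
      rw [abs_mul, abs_of_nonneg (hρB0 y)]
  have hFBval : ∫ p, ρ p * log (ρB p.2) ∂(μ.prod ν) = ∫ y, ρB y * log (ρB y) ∂ν := by
    rw [integral_prod_symm _ hFBint]
    congr 1 with y
    simp only
    rw [integral_mul_const, ← hρB y]
  -- a.e., ρA p.1 = 0 → ρ p = 0
  have hAzero : ∀ᵐ p ∂(μ.prod ν), ρA p.1 = 0 → ρ p = 0 := by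
    have hms : MeasurableSet {p : X × Y | ρA p.1 = 0 → ρ p = 0} := by
      have : MeasurableSet {p : X × Y | ρA p.1 = 0 ∧ ¬ ρ p = 0} :=
        ((hρAm.measurable.comp measurable_fst) (measurableSet_singleton 0)).inter
          ((hρm (measurableSet_singleton 0)).compl)
      have he : {p : X × Y | ρA p.1 = 0 → ρ p = 0}
          = {p : X × Y | ρA p.1 = 0 ∧ ¬ ρ p = 0}ᶜ := by
        ext p; simp [imp_iff_not_or, or_comm]
      rw [he]; exact this.compl
    rw [Measure.ae_prod_iff_ae_ae hms]
    filter_upwards [hρint.prod_right_ae] with x hx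
    by_cases hA : ρA x = 0
    · have h0 : ∫ y, ρ (x, y) ∂ν = 0 := by rw [← hρA x, hA]
      have := (integral_eq_zero_iff_of_nonneg (fun y => hρ0 _) hx).mp h0
      filter_upwards [this] with y hy
      intro _
      exact hy
    · filter_upwards with y h; exact absurd h hA
  have hBzero : ∀ᵐ p ∂(μ.prod ν), ρB p.2 = 0 → ρ p = 0 := by
    have hms : MeasurableSet {p : X × Y | ρB p.2 = 0 → ρ p = 0} := by
      have : MeasurableSet {p : X × Y | ρB p.2 = 0 ∧ ¬ ρ p = 0} :=
        ((hρBm.measurable.comp measurable_snd) (measurableSet_singleton 0)).inter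
          ((hρm (measurableSet_singleton 0)).compl)
      have he : {p : X × Y | ρB p.2 = 0 → ρ p = 0}
          = {p : X × Y | ρB p.2 = 0 ∧ ¬ ρ p = 0}ᶜ := by
        ext p; simp [imp_iff_not_or, or_comm]
      rw [he]; exact this.compl
    rw [Measure.ae_prod_iff_ae_ae hms, Measure.ae_ae_comm hms]
    filter_upwards [hρint.prod_left_ae] with y hy
    by_cases hB : ρB y = 0
    · have h0 : ∫ x, ρ (x, y) ∂μ = 0 := by rw [← hρB y, hB]
      have := (integral_eq_zero_iff_of_nonneg (fun x => hρ0 _) hy).mp h0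
      filter_upwards [this] with x hx
      intro _
      exact hx
    · filter_upwards with x h; exact absurd h hB
  -- pointwise Gibbs inequality, a.e.
  have hpt : ∀ᵐ p ∂(μ.prod ν),
      ρ p - ρA p.1 * ρB p.2 ≤
        ρ p * log (ρ p) - ρ p * log (ρA p.1) - ρ p * log (ρB p.2) := by
    filter_upwards [hAzero, hBzero] with p hA hB
    rcases eq_or_lt_of_le (hρ0 p) with h0 | hpos
    · rw [← h0]
      simp [mul_nonneg (hρA0 p.1) (hρB0 p.2)]
    · have hApos : 0 < ρA p.1 := by
        rcases eq_or_lt_of_le (hρA0 p.1) with h | h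
        · exact absurd (hA h.symm) (ne_of_gt hpos)
        · exact h
      have hBpos : 0 < ρB p.2 := by
        rcases eq_or_lt_of_le (hρB0 p.2) with h | h
        · exact absurd (hB h.symm) (ne_of_gt hpos)
        · exact h
      have hg : 0 < ρA p.1 * ρB p.2 := mul_pos hApos hBpos
      have key : log (ρA p.1 * ρB p.2 / ρ p) ≤ ρA p.1 * ρB p.2 / ρ p - 1 :=
        log_le_sub_one_of_pos (div_pos hg hpos)
      have hlog : log (ρA p.1 * ρB p.2 / ρ p)
          = log (ρA p.1) + log (ρB p.2) - log (ρ p) := by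
        rw [log_div (ne_of_gt hg) (ne_of_gt hpos), log_mul (ne_of_gt hApos) (ne_of_gt hBpos)]
      rw [hlog] at key
      have hmul := mul_le_mul_of_nonneg_left key (le_of_lt hpos)
      have hc : ρ p * (ρA p.1 * ρB p.2 / ρ p) = ρA p.1 * ρB p.2 := by
        field_simp
      nlinarith [hmul, hc]
  -- integrate the pointwise inequality
  have hgint : Integrable (fun p : X × Y => ρA p.1 * ρB p.2) (μ.prod ν) :=
    hρAint.mul_prod hρBint
  have hLA : Integrable (fun p : X × Y =>
      ρ p * log (ρ p) - ρ p * log (ρA p.1)) (μ.prod ν) := hent.sub hFAint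
  have hL : Integrable (fun p : X × Y =>
      ρ p * log (ρ p) - ρ p * log (ρA p.1) - ρ p * log (ρB p.2)) (μ.prod ν) :=
    hLA.sub hFBint
  have hR : Integrable (fun p : X × Y => ρ p - ρA p.1 * ρB p.2) (μ.prod ν) :=
    hρint.sub hgint
  have hmono := integral_mono_ae hR hL hpt
  rw [integral_sub hρint hgint, integral_sub hLA hFBint,
    integral_sub hent hFAint, hρ1, integral_prod_mul, hρA1, hρB1,
    hFAval, hFBval] at hmono
  linarith
end

section
/- Let (X, μ) and (Y, ν) be σ-finite measure spaces and let ρ : X × Y → ℝ be a probability density with respect to μ ⊗ ν such that ρ·log ρ is integrable; let ρ_A(x) = ∫ ρ(x,y) dν(y) and ρ_B(y) = ∫ ρ(x,y) dμ(x) be the marginal densities, with ρ_A·log ρ_A and ρ_B·log ρ_B integrable. If S[ρ] = S[ρ_A] + S[ρ_B], then ρ(x,y) = ρ_A(x)·ρ_B(y) for (μ ⊗ ν)-almost every (x,y); that is, equality in subadditivity holds only if the subsystems are probabilistically independent. -/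
open MeasureTheory Real

private lemma gibbs_key_ineq {a b : ℝ} (ha : 0 < a) (hb : 0 < b) :
    a - b ≤ a * log a - a * log b := by
  have h := Real.log_le_sub_one_of_pos (div_pos hb ha)
  rw [log_div hb.ne' ha.ne'] at h
  have h1 := mul_le_mul_of_nonneg_left h ha.le
  have h2 : a * (b / a - 1) = b - a := by field_simp
  rw [h2] at h1
  nlinarith [h1]

private lemma gibbs_key_eq {a b : ℝ} (ha : 0 < a) (hb : 0 < b)
    (h : a * log a - a * log b - a + b = 0) : a = b := by
  by_contra hne
  have hba : b / a ≠ 1 := by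
    intro hh
    apply hne
    have : b = a := by field_simp at hh; linarith
    linarith
  have h2 := Real.log_lt_sub_one_of_pos (div_pos hb ha) hba
  rw [log_div hb.ne' ha.ne'] at h2
  have h3 := (mul_lt_mul_iff_right₀ ha).2 h2
  have h4 : a * (b / a - 1) = b - a := by field_simp
  rw [h4] at h3
  nlinarith [h3]

/-- Equality in subadditivity of the Gibbs entropy holds only if the
subsystems are probabilistically independent. -/
theorem gibbs_entropy_subadditive_eq_iff_independent
    {X Y : Type*} [MeasurableSpace X] [MeasurableSpace Y]
    (μ : Measure X) (ν : Measure Y) [SigmaFinite μ] [SigmaFinite ν]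
    (ρ : X × Y → ℝ) (hρm : Measurable ρ) (hρ0 : ∀ p, 0 ≤ ρ p)
    (hρ1 : ∫ p, ρ p ∂(μ.prod ν) = 1)
    (hent : Integrable (fun p => ρ p * log (ρ p)) (μ.prod ν))
    (ρA : X → ℝ) (hρA : ∀ x, ρA x = ∫ y, ρ (x, y) ∂ν)
    (ρB : Y → ℝ) (hρB : ∀ y, ρB y = ∫ x, ρ (x, y) ∂μ)
    (hentA : Integrable (fun x => ρA x * log (ρA x)) μ)
    (hentB : Integrable (fun y => ρB y * log (ρB y)) ν)
    (heq : -(∫ p, ρ p * log (ρ p) ∂(μ.prod ν)) =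
      -(∫ x, ρA x * log (ρA x) ∂μ) + -(∫ y, ρB y * log (ρB y) ∂ν)) :
    ρ =ᵐ[μ.prod ν] fun p => ρA p.1 * ρB p.2 := by
  -- ρ is integrable (otherwise its integral would be 0, not 1)
  have hρint : Integrable ρ (μ.prod ν) := by
    by_contra h
    rw [integral_undef h] at hρ1
    norm_num at hρ1
  have hρAfun : ρA = fun x => ∫ y, ρ (x, y) ∂ν := funext hρA
  have hρBfun : ρB = fun y => ∫ x, ρ (x, y) ∂μ := funext hρB
  -- measurability of the marginals
  have hmA : Measurable ρA := by
    rw [hρAfun]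
    exact hρm.stronglyMeasurable.integral_prod_right'.measurable
  have hmB : Measurable ρB := by
    rw [hρBfun]
    exact hρm.stronglyMeasurable.integral_prod_left'.measurable
  -- nonnegativity of the marginals
  have hA0 : ∀ x, 0 ≤ ρA x := fun x => (hρA x) ▸ integral_nonneg fun y => hρ0 _
  have hB0 : ∀ y, 0 ≤ ρB y := fun y => (hρB y) ▸ integral_nonneg fun x => hρ0 _
  -- integrability of the marginals
  have hAint : Integrable ρA μ := by
    rw [hρAfun]; exact hρint.integral_prod_left
  have hBint : Integrable ρB ν := by
    rw [hρBfun]; exact hρint.integral_prod_right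
  -- the marginals are densities
  have hA1 : ∫ x, ρA x ∂μ = 1 := by
    rw [hρAfun, ← integral_prod _ hρint]; exact hρ1
  have hB1 : ∫ y, ρB y ∂ν = 1 := by
    rw [hρBfun, ← integral_prod_symm _ hρint]; exact hρ1
  -- the product of marginals
  have hgint : Integrable (fun p : X × Y => ρA p.1 * ρB p.2) (μ.prod ν) :=
    hAint.mul_prod hBint
  have hg1 : ∫ p, ρA p.1 * ρB p.2 ∂(μ.prod ν) = 1 := by
    rw [integral_prod_mul, hA1, hB1]; norm_num
  -- integrability of ρ p * log (ρA p.1)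
  have hmf1 : Measurable fun p : X × Y => ρ p * log (ρA p.1) :=
    hρm.mul (Real.measurable_log.comp (hmA.comp measurable_fst))
  have hf1int : Integrable (fun p : X × Y => ρ p * log (ρA p.1)) (μ.prod ν) := by
    rw [integrable_prod_iff hmf1.aestronglyMeasurable]
    constructor
    · filter_upwards [hρint.prod_right_ae] with x hx
      exact hx.mul_const _
    · have hcongr : (fun x => ∫ y, ‖ρ (x, y) * log (ρA x)‖ ∂ν) =
          fun x => |ρA x * log (ρA x)| := by
        funext x
        have : ∀ y, ‖ρ (x, y) * log (ρA x)‖ = ρ (x, y) * |log (ρA x)| := by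
          intro y
          rw [norm_mul, Real.norm_eq_abs, Real.norm_eq_abs,
            abs_of_nonneg (hρ0 _)]
        simp_rw [this]
        rw [integral_mul_const, ← hρA x, abs_mul, abs_of_nonneg (hA0 x)]
      rw [hcongr]
      exact hentA.abs
  have hIf1 : ∫ p, ρ p * log (ρA p.1) ∂(μ.prod ν) = ∫ x, ρA x * log (ρA x) ∂μ := by
    rw [integral_prod _ hf1int]
    refine integral_congr_ae (ae_of_all _ fun x => ?_)
    show ∫ y, ρ (x, y) * log (ρA x) ∂ν = _
    rw [integral_mul_const, ← hρA x]
  -- integrability of ρ p * log (ρB p.2)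
  have hmf2 : Measurable fun p : X × Y => ρ p * log (ρB p.2) :=
    hρm.mul (Real.measurable_log.comp (hmB.comp measurable_snd))
  have hf2int : Integrable (fun p : X × Y => ρ p * log (ρB p.2)) (μ.prod ν) := by
    rw [integrable_prod_iff' hmf2.aestronglyMeasurable]
    constructor
    · filter_upwards [hρint.prod_left_ae] with y hy
      exact hy.mul_const _
    · have hcongr : (fun y => ∫ x, ‖ρ (x, y) * log (ρB y)‖ ∂μ) =
          fun y => |ρB y * log (ρB y)| := by
        funext y
        have : ∀ x, ‖ρ (x, y) * log (ρB y)‖ = ρ (x, y) * |log (ρB y)| := by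
          intro x
          rw [norm_mul, Real.norm_eq_abs, Real.norm_eq_abs,
            abs_of_nonneg (hρ0 _)]
        simp_rw [this]
        rw [integral_mul_const, ← hρB y, abs_mul, abs_of_nonneg (hB0 y)]
      rw [hcongr]
      exact hentB.abs
  have hIf2 : ∫ p, ρ p * log (ρB p.2) ∂(μ.prod ν) = ∫ y, ρB y * log (ρB y) ∂ν := by
    rw [integral_prod_symm _ hf2int]
    refine integral_congr_ae (ae_of_all _ fun y => ?_)
    show ∫ x, ρ (x, y) * log (ρB y) ∂μ = _
    rw [integral_mul_const, ← hρB y]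
  -- a.e., ρA p.1 = 0 implies ρ p = 0
  have hAzero : ∀ᵐ p ∂(μ.prod ν), ρA p.1 = 0 → ρ p = 0 := by
    set φ : X × Y → ℝ := fun p => if ρA p.1 = 0 then ρ p else 0 with hφ
    have hφm : Measurable φ := by
      exact Measurable.ite ((hmA.comp measurable_fst) (measurableSet_singleton 0))
        hρm measurable_const
    have hφint : Integrable φ (μ.prod ν) := by
      refine hρint.mono hφm.aestronglyMeasurable (ae_of_all _ fun p => ?_)
      by_cases h : ρA p.1 = 0 <;>
        simp [hφ, h, Real.norm_eq_abs, abs_of_nonneg (hρ0 p), hρ0 p]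
    have hφ0 : ∀ p, 0 ≤ φ p := by
      intro p
      by_cases h : ρA p.1 = 0 <;> simp [hφ, h, hρ0 p]
    have hφI : ∫ p, φ p ∂(μ.prod ν) = 0 := by
      rw [integral_prod _ hφint]
      have hin : ∀ x, ∫ y, φ (x, y) ∂ν = 0 := by
        intro x
        by_cases h : ρA x = 0
        · simp only [hφ, h, if_true]
          rw [← hρA x]
          exact h
        · simp [hφ, h]
      simp [hin]
    have hz := (integral_eq_zero_iff_of_nonneg hφ0 hφint).1 hφI
    filter_upwards [hz] with p hp h0
    simpa [hφ, h0] using hp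
  -- a.e., ρB p.2 = 0 implies ρ p = 0
  have hBzero : ∀ᵐ p ∂(μ.prod ν), ρB p.2 = 0 → ρ p = 0 := by
    set ψ : X × Y → ℝ := fun p => if ρB p.2 = 0 then ρ p else 0 with hψ
    have hψm : Measurable ψ := by
      exact Measurable.ite ((hmB.comp measurable_snd) (measurableSet_singleton 0))
        hρm measurable_const
    have hψint : Integrable ψ (μ.prod ν) := by
      refine hρint.mono hψm.aestronglyMeasurable (ae_of_all _ fun p => ?_)
      by_cases h : ρB p.2 = 0 <;>
        simp [hψ, h, Real.norm_eq_abs, abs_of_nonneg (hρ0 p), hρ0 p]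
    have hψ0 : ∀ p, 0 ≤ ψ p := by
      intro p
      by_cases h : ρB p.2 = 0 <;> simp [hψ, h, hρ0 p]
    have hψI : ∫ p, ψ p ∂(μ.prod ν) = 0 := by
      rw [integral_prod_symm _ hψint]
      have hin : ∀ y, ∫ x, ψ (x, y) ∂μ = 0 := by
        intro y
        by_cases h : ρB y = 0
        · simp only [hψ, h, if_true]
          rw [← hρB y]
          exact h
        · simp [hψ, h]
      simp [hin]
    have hz := (integral_eq_zero_iff_of_nonneg hψ0 hψint).1 hψI
    filter_upwards [hz] with p hp h0
    simpa [hψ, h0] using hp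
  -- the key function F
  set F : X × Y → ℝ := fun p =>
    ρ p * log (ρ p) - ρ p * log (ρA p.1) - ρ p * log (ρB p.2) - ρ p +
      ρA p.1 * ρB p.2 with hFdef
  have hFint : Integrable F (μ.prod ν) :=
    ((((hent.sub hf1int).sub hf2int).sub hρint).add hgint)
  have hFI : ∫ p, F p ∂(μ.prod ν) = 0 := by
    have e1 : ∫ p, F p ∂(μ.prod ν) =
        (∫ p, (ρ p * log (ρ p) - ρ p * log (ρA p.1) - ρ p * log (ρB p.2) - ρ p)
            ∂(μ.prod ν)) + ∫ p, ρA p.1 * ρB p.2 ∂(μ.prod ν) :=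
      integral_add (((hent.sub hf1int).sub hf2int).sub hρint) hgint
    have e2 : ∫ p, (ρ p * log (ρ p) - ρ p * log (ρA p.1) - ρ p * log (ρB p.2) - ρ p)
          ∂(μ.prod ν) =
        (∫ p, (ρ p * log (ρ p) - ρ p * log (ρA p.1) - ρ p * log (ρB p.2))
            ∂(μ.prod ν)) - ∫ p, ρ p ∂(μ.prod ν) :=
      integral_sub ((hent.sub hf1int).sub hf2int) hρint
    have e3 : ∫ p, (ρ p * log (ρ p) - ρ p * log (ρA p.1) - ρ p * log (ρB p.2))
          ∂(μ.prod ν) =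
        (∫ p, (ρ p * log (ρ p) - ρ p * log (ρA p.1)) ∂(μ.prod ν)) -
          ∫ p, ρ p * log (ρB p.2) ∂(μ.prod ν) :=
      integral_sub (hent.sub hf1int) hf2int
    have e4 : ∫ p, (ρ p * log (ρ p) - ρ p * log (ρA p.1)) ∂(μ.prod ν) =
        (∫ p, ρ p * log (ρ p) ∂(μ.prod ν)) - ∫ p, ρ p * log (ρA p.1) ∂(μ.prod ν) :=
      integral_sub hent hf1int
    rw [e1, e2, e3, e4, hIf1, hIf2, hρ1, hg1]
    linarith
  -- F is a.e. nonnegative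
  have hFpos : 0 ≤ᵐ[μ.prod ν] F := by
    filter_upwards [hAzero, hBzero] with p hA hB
    by_cases h : ρ p = 0
    · simp only [hFdef, Pi.zero_apply, h, zero_mul, log_zero, mul_zero, sub_zero,
        zero_sub, neg_zero, zero_add]
      exact mul_nonneg (hA0 _) (hB0 _)
    · have hρp : 0 < ρ p := lt_of_le_of_ne (hρ0 p) (Ne.symm h)
      have hApos : 0 < ρA p.1 :=
        lt_of_le_of_ne (hA0 _) fun hh => h (hA hh.symm)
      have hBpos : 0 < ρB p.2 :=
        lt_of_le_of_ne (hB0 _) fun hh => h (hB hh.symm)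
      have hb : 0 < ρA p.1 * ρB p.2 := mul_pos hApos hBpos
      have hki := gibbs_key_ineq hρp hb
      have hlg : ρ p * log (ρA p.1 * ρB p.2) =
          ρ p * log (ρA p.1) + ρ p * log (ρB p.2) := by
        rw [log_mul hApos.ne' hBpos.ne']; ring
      simp only [hFdef, Pi.zero_apply]
      linarith
  have hF0 : F =ᵐ[μ.prod ν] 0 :=
    (integral_eq_zero_iff_of_nonneg_ae hFpos hFint).1 hFI
  -- conclude
  filter_upwards [hF0, hAzero, hBzero] with p hFp hA hB
  simp only [hFdef, Pi.zero_apply] at hFp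
  by_cases h : ρ p = 0
  · rw [h, log_zero] at hFp
    simp only [zero_mul, mul_zero, sub_zero, zero_sub, neg_zero, zero_add] at hFp
    show ρ p = ρA p.1 * ρB p.2
    rw [h, ← hFp]
  · have hρp : 0 < ρ p := lt_of_le_of_ne (hρ0 p) (Ne.symm h)
    have hApos : 0 < ρA p.1 :=
      lt_of_le_of_ne (hA0 _) fun hh => h (hA hh.symm)
    have hBpos : 0 < ρB p.2 :=
      lt_of_le_of_ne (hB0 _) fun hh => h (hB hh.symm)
    have hb : 0 < ρA p.1 * ρB p.2 := mul_pos hApos hBpos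
    have hlg : ρ p * log (ρA p.1 * ρB p.2) =
        ρ p * log (ρA p.1) + ρ p * log (ρB p.2) := by
      rw [log_mul hApos.ne' hBpos.ne']; ring
    exact gibbs_key_eq hρp hb (by linarith)
end

section
/- Let ι be a finite index type and for each i ∈ ι let (Ω_i, μ_i) be a σ-finite measure space (each μ_i a probability measure or σ-finite). Let π be a probability density with respect to the product measure ⊗_{i∈ι} μ_i with π·log π integrable, and for each i let π_i be the i-th marginal density (obtained by integrating π over all coordinates other than the i-th), with π_i·log π_i integrable. Then S[π] ≤ ∑_{i∈ι} S[π_i]. -/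
open MeasureTheory Real

/-!
With `q y = ∏ i, π_i (y i)`, a probability density on the product, the pointwise inequality
`a - b ≤ a log a - a log b` (which is `log x ≤ x - 1`) integrates to Gibbs' inequality
`∫ π log q ≤ ∫ π log π`. Where `π > 0` every `π_i (y i)` is positive, so `π log q` splits as
`∑ i, π (y) log π_i (y i)`, and since `π_i` is the density of the image of `π • μ` under the
`i`-th coordinate, `∫ π (y) log π_i (y i) = ∫ π_i log π_i`.
-/

namespace Real

lemma sub_le_mul_log_sub_mul_log {a b : ℝ} (ha : 0 ≤ a) (hb : 0 ≤ b) (hab : 0 < a → 0 < b) :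
    a - b ≤ a * log a - a * log b := by
  rcases ha.eq_or_lt with rfl | ha
  · simpa using hb
  have hb := hab ha
  calc a - b = a * (1 - (a / b)⁻¹) := by field_simp
    _ ≤ a * log (a / b) :=
      mul_le_mul_of_nonneg_left (one_sub_inv_le_log_of_pos (by positivity)) ha.le
    _ = a * log a - a * log b := by rw [log_div ha.ne' hb.ne']; ring

lemma mul_log_prod {ι : Type*} (s : Finset ι) {a : ℝ} {b : ι → ℝ}
    (h : a ≠ 0 → ∀ i ∈ s, b i ≠ 0) :
    a * log (∏ i ∈ s, b i) = ∑ i ∈ s, a * log (b i) := by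
  rcases eq_or_ne a 0 with rfl | ha
  · simp
  · rw [log_prod (h ha), Finset.mul_sum]

end Real

namespace MeasureTheory

variable {α β : Type*} [MeasurableSpace α] [MeasurableSpace β] {μ : Measure α}

lemma integral_withDensity_ofReal {ρ : α → ℝ} (hρ : AEMeasurable ρ μ) (hρ0 : 0 ≤ᵐ[μ] ρ)
    (g : α → ℝ) :
    ∫ x, g x ∂μ.withDensity (fun x => ENNReal.ofReal (ρ x)) = ∫ x, ρ x * g x ∂μ := by
  rw [integral_withDensity_eq_integral_toReal_smul₀ hρ.ennreal_ofReal
    (ae_of_all _ fun _ => ENNReal.ofReal_lt_top)]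
  refine integral_congr_ae ?_
  filter_upwards [hρ0] with x hx
  simp [ENNReal.toReal_ofReal hx]

lemma integrable_withDensity_ofReal_iff {ρ : α → ℝ} (hρ : AEMeasurable ρ μ) (hρ0 : 0 ≤ᵐ[μ] ρ)
    {g : α → ℝ} :
    Integrable g (μ.withDensity fun x => ENNReal.ofReal (ρ x)) ↔
      Integrable (fun x => ρ x * g x) μ := by
  rw [integrable_withDensity_iff_integrable_smul₀' hρ.ennreal_ofReal
    (ae_of_all _ fun _ => ENNReal.ofReal_lt_top)]
  refine integrable_congr ?_
  filter_upwards [hρ0] with x hx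
  simp [ENNReal.toReal_ofReal hx]

lemma integral_mul_log_le_integral_mul_log {p q : α → ℝ} (hp0 : 0 ≤ᵐ[μ] p) (hq0 : 0 ≤ᵐ[μ] q)
    (hpq : ∀ᵐ x ∂μ, 0 < p x → 0 < q x) (hp : Integrable p μ) (hq : Integrable q μ)
    (hplogp : Integrable (fun x => p x * log (p x)) μ)
    (hplogq : Integrable (fun x => p x * log (q x)) μ) (hpq_int : ∫ x, q x ∂μ ≤ ∫ x, p x ∂μ) :
    ∫ x, p x * log (q x) ∂μ ≤ ∫ x, p x * log (p x) ∂μ := by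
  have key : ∫ x, (p x - q x) ∂μ ≤ ∫ x, (p x * log (p x) - p x * log (q x)) ∂μ := by
    refine integral_mono_ae (hp.sub hq) (hplogp.sub hplogq) ?_
    filter_upwards [hp0, hq0, hpq] with x hpx hqx hpqx
    exact sub_le_mul_log_sub_mul_log hpx hqx hpqx
  rw [integral_sub hp hq, integral_sub hplogp hplogq] at key
  linarith

lemma sum_integral_mul_log_le_integral_mul_log {ι : Type*} [Fintype ι] {p : α → ℝ}
    {q : ι → α → ℝ} (hp0 : 0 ≤ᵐ[μ] p) (hq0 : ∀ i, 0 ≤ᵐ[μ] q i)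
    (hpq : ∀ i, ∀ᵐ x ∂μ, 0 < p x → 0 < q i x) (hp : Integrable p μ)
    (hq : Integrable (fun x => ∏ i, q i x) μ) (hplogp : Integrable (fun x => p x * log (p x)) μ)
    (hplogq : ∀ i, Integrable (fun x => p x * log (q i x)) μ)
    (hpq_int : ∫ x, ∏ i, q i x ∂μ ≤ ∫ x, p x ∂μ) :
    ∑ i, ∫ x, p x * log (q i x) ∂μ ≤ ∫ x, p x * log (p x) ∂μ := by
  have hpos : ∀ᵐ x ∂μ, 0 < p x → ∀ i, 0 < q i x := by
    filter_upwards [ae_all_iff.2 hpq] with x hx hpx i using hx i hpx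
  have hlog : (fun x => p x * log (∏ i, q i x)) =ᵐ[μ] fun x => ∑ i, p x * log (q i x) := by
    filter_upwards [hp0, hpos] with x hpx hx
    exact mul_log_prod _ fun hpx' i _ => (hx (hpx.lt_of_ne' hpx') i).ne'
  have hgibbs := integral_mul_log_le_integral_mul_log hp0
    ((ae_all_iff.2 hq0).mono fun x hx => Finset.prod_nonneg fun i _ => hx i)
    (hpos.mono fun x hx hpx => Finset.prod_pos fun i _ => hx hpx i) hp hq hplogp
    ((integrable_finsetSum _ fun i _ => hplogq i).congr hlog.symm) hpq_int
  rwa [integral_congr_ae hlog, integral_finsetSum _ fun i _ => hplogq i] at hgibbs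

def IsPushforwardDensity (f : α → β) (μ : Measure α) (ρ : α → ℝ) (ν : Measure β) (σ : β → ℝ) :
    Prop :=
  ∀ s, MeasurableSet s → ∫ x in s, σ x ∂ν = ∫ y in f ⁻¹' s, ρ y ∂μ

namespace IsPushforwardDensity

variable {ν : Measure β} {f : α → β} {ρ : α → ℝ} {σ : β → ℝ}

lemma integral_eq (h : IsPushforwardDensity f μ ρ ν σ) : ∫ x, σ x ∂ν = ∫ y, ρ y ∂μ := by
  simpa using h Set.univ MeasurableSet.univ

lemma ae_nonneg (h : IsPushforwardDensity f μ ρ ν σ) (hσ : Integrable σ ν) (hρ0 : 0 ≤ᵐ[μ] ρ) :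
    0 ≤ᵐ[ν] σ :=
  ae_nonneg_of_forall_setIntegral_nonneg hσ fun s hs _ =>
    (h s hs).symm ▸ integral_nonneg_of_ae (ae_restrict_of_ae hρ0)

lemma map_withDensity (h : IsPushforwardDensity f μ ρ ν σ) (hf : Measurable f)
    (hρ : Integrable ρ μ) (hρ0 : 0 ≤ᵐ[μ] ρ) (hσ : Integrable σ ν) :
    (μ.withDensity fun y => ENNReal.ofReal (ρ y)).map f =
      ν.withDensity fun x => ENNReal.ofReal (σ x) := by
  ext s hs
  rw [Measure.map_apply hf hs, withDensity_apply _ (hf hs), withDensity_apply _ hs,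
    ← ofReal_integral_eq_lintegral_ofReal hρ.restrict (ae_restrict_of_ae hρ0),
    ← ofReal_integral_eq_lintegral_ofReal hσ.restrict
      (ae_restrict_of_ae (h.ae_nonneg hσ hρ0)), h s hs]

lemma ae_pos_comp (h : IsPushforwardDensity f μ ρ ν σ) (hf : Measurable f)
    (hρ : Integrable ρ μ) (hρ0 : 0 ≤ᵐ[μ] ρ) (hσ : Integrable σ ν) :
    ∀ᵐ y ∂μ, 0 < ρ y → 0 < σ (f y) := by
  have hσpos : ∀ᵐ x ∂(ν.withDensity fun x => ENNReal.ofReal (σ x)), 0 < σ x :=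
    (ae_withDensity_iff' hσ.aemeasurable.ennreal_ofReal).2 <|
      ae_of_all _ fun x hx => ENNReal.ofReal_pos.1 (pos_iff_ne_zero.2 hx)
  rw [← h.map_withDensity hf hρ hρ0 hσ] at hσpos
  filter_upwards [(ae_withDensity_iff' hρ.aemeasurable.ennreal_ofReal).1
    (ae_of_ae_map hf.aemeasurable hσpos)] with y hy hρy
  exact hy (ENNReal.ofReal_pos.2 hρy).ne'

lemma aestronglyMeasurable_map_withDensity (h : IsPushforwardDensity f μ ρ ν σ)
    (hf : Measurable f) (hρ : Integrable ρ μ) (hρ0 : 0 ≤ᵐ[μ] ρ) (hσ : Integrable σ ν) {g : β → ℝ}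
    (hg : AEStronglyMeasurable g ν) :
    AEStronglyMeasurable g ((μ.withDensity fun y => ENNReal.ofReal (ρ y)).map f) :=
  h.map_withDensity hf hρ hρ0 hσ ▸ hg.mono_ac (withDensity_absolutelyContinuous _ _)

lemma integrable_mul_comp (h : IsPushforwardDensity f μ ρ ν σ) (hf : Measurable f)
    (hρ : Integrable ρ μ) (hρ0 : 0 ≤ᵐ[μ] ρ) (hσ : Integrable σ ν) {g : β → ℝ}
    (hg : AEStronglyMeasurable g ν) (hσg : Integrable (fun x => σ x * g x) ν) :
    Integrable (fun y => ρ y * g (f y)) μ := by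
  rw [← integrable_withDensity_ofReal_iff hρ.aemeasurable hρ0]
  refine (integrable_map_measure (h.aestronglyMeasurable_map_withDensity hf hρ hρ0 hσ hg)
    hf.aemeasurable).1 ?_
  rwa [h.map_withDensity hf hρ hρ0 hσ,
    integrable_withDensity_ofReal_iff hσ.aemeasurable (h.ae_nonneg hσ hρ0)]

lemma integral_mul_comp (h : IsPushforwardDensity f μ ρ ν σ) (hf : Measurable f)
    (hρ : Integrable ρ μ) (hρ0 : 0 ≤ᵐ[μ] ρ) (hσ : Integrable σ ν) {g : β → ℝ}
    (hg : AEStronglyMeasurable g ν) :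
    ∫ y, ρ y * g (f y) ∂μ = ∫ x, σ x * g x ∂ν := by
  rw [← integral_withDensity_ofReal hρ.aemeasurable hρ0,
    ← integral_withDensity_ofReal hσ.aemeasurable (h.ae_nonneg hσ hρ0),
    ← h.map_withDensity hf hρ hρ0 hσ,
    integral_map hf.aemeasurable (h.aestronglyMeasurable_map_withDensity hf hρ hρ0 hσ hg)]

end IsPushforwardDensity

end MeasureTheory

theorem gibbs_entropy_subadditive_finite_general
    {ι : Type*} [Fintype ι] {Ω : ι → Type*} [∀ i, MeasurableSpace (Ω i)]
    (μ : ∀ i, Measure (Ω i)) [∀ i, SigmaFinite (μ i)]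
    (ρ : (∀ i, Ω i) → ℝ) (hρ0 : ∀ y, 0 ≤ ρ y)
    (hρ1 : ∫ y, ρ y ∂(Measure.pi μ) = 1)
    (hent : Integrable (fun y => ρ y * log (ρ y)) (Measure.pi μ))
    (ρm : ∀ i, Ω i → ℝ)
    (hmarg : ∀ i, ∀ s : Set (Ω i), MeasurableSet s →
      ∫ x in s, ρm i x ∂(μ i) = ∫ y in {y : ∀ j, Ω j | y i ∈ s}, ρ y ∂(Measure.pi μ))
    (hentm : ∀ i, Integrable (fun x => ρm i x * log (ρm i x)) (μ i)) :
    -(∫ y, ρ y * log (ρ y) ∂(Measure.pi μ)) ≤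
      ∑ i, -(∫ x, ρm i x * log (ρm i x) ∂(μ i)) := by
  have hρ : Integrable ρ (Measure.pi μ) := .of_integral_ne_zero (by simp [hρ1])
  have hρ0' : 0 ≤ᵐ[Measure.pi μ] ρ := ae_of_all _ hρ0
  have hpush (i : ι) : IsPushforwardDensity (fun y => y i) (Measure.pi μ) ρ (μ i) (ρm i) :=
    hmarg i
  have hρm1 (i : ι) : ∫ x, ρm i x ∂(μ i) = 1 := (hpush i).integral_eq.trans hρ1
  have hρm (i : ι) : Integrable (ρm i) (μ i) := .of_integral_ne_zero (by simp [hρm1 i])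
  have hlogm (i : ι) : AEStronglyMeasurable (fun x => log (ρm i x)) (μ i) :=
    (hρm i).aemeasurable.log.aestronglyMeasurable
  have hcross_int (i : ι) : Integrable (fun y => ρ y * log (ρm i (y i))) (Measure.pi μ) :=
    (hpush i).integrable_mul_comp (measurable_pi_apply i) hρ hρ0' (hρm i) (hlogm i) (hentm i)
  have hcross (i : ι) :
      ∫ y, ρ y * log (ρm i (y i)) ∂(Measure.pi μ) = ∫ x, ρm i x * log (ρm i x) ∂(μ i) :=
    (hpush i).integral_mul_comp (measurable_pi_apply i) hρ hρ0' (hρm i) (hlogm i)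
  have hgibbs := sum_integral_mul_log_le_integral_mul_log hρ0'
    (fun i => Measure.tendsto_eval_ae_ae.eventually ((hpush i).ae_nonneg (hρm i) hρ0'))
    (fun i => (hpush i).ae_pos_comp (measurable_pi_apply i) hρ hρ0' (hρm i))
    hρ (.fintype_prod_dep hρm) hent hcross_int
    (by rw [integral_fintype_prod_eq_prod, hρ1]; simp [hρm1])
  rw [Finset.sum_neg_distrib, neg_le_neg_iff, ← Finset.sum_congr rfl fun i _ => hcross i]
  exact hgibbs

/-- n-fold subadditivity of the Gibbs entropy: `S[ρ] ≤ ∑ i, S[ρm i]`,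
where `ρm i` is the `i`-th marginal density of the joint density `ρ`. -/
theorem gibbs_entropy_subadditive_finite
    {ι : Type*} [Fintype ι] {Ω : ι → Type*} [∀ i, MeasurableSpace (Ω i)]
    (μ : ∀ i, Measure (Ω i)) [∀ i, SigmaFinite (μ i)]
    (ρ : (∀ i, Ω i) → ℝ) (hρm : Measurable ρ) (hρ0 : ∀ y, 0 ≤ ρ y)
    (hρ1 : ∫ y, ρ y ∂(Measure.pi μ) = 1)
    (hent : Integrable (fun y => ρ y * log (ρ y)) (Measure.pi μ))
    (ρm : ∀ i, Ω i → ℝ) (hρmm : ∀ i, Measurable (ρm i))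
    (hmarg : ∀ i, ∀ s : Set (Ω i), MeasurableSet s →
      ∫ x in s, ρm i x ∂(μ i) = ∫ y in {y : ∀ j, Ω j | y i ∈ s}, ρ y ∂(Measure.pi μ))
    (hentm : ∀ i, Integrable (fun x => ρm i x * log (ρm i x)) (μ i)) :
    -(∫ y, ρ y * log (ρ y) ∂(Measure.pi μ)) ≤
      ∑ i, -(∫ x, ρm i x * log (ρm i x) ∂(μ i)) :=
  gibbs_entropy_subadditive_finite_general μ ρ hρ0 hρ1 hent ρm hmarg hentm
end

section
/- Let (X, μ) and (Y, ν) be σ-finite measure spaces, ρ_A⁰ a probability density on (X, μ) and ρ_B⁰ a probability density on (Y, ν), each with integrable ρ·log ρ. Let Φ : X × Y → X × Y be a measurable bijection with measurable inverse such that both Φ and Φ⁻¹ preserve the measure μ ⊗ ν, and let ρ₁ = (ρ_A⁰ ⊗ ρ_B⁰) ∘ Φ⁻¹ be the evolved joint density, with marginals ρ_A¹, ρ_B¹ whose ρ·log ρ are integrable. Then S[ρ_A¹] + S[ρ_B¹] ≥ S[ρ_A⁰] + S[ρ_B⁰]. -/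
/-!
By Liouville, `Φ⁻¹` preserves `μ ⊗ ν`, so the evolved joint density `ρ₁ = (ρ_A⁰ ⊗ ρ_B⁰) ∘ Φ⁻¹`
has the Gibbs entropy of `ρ_A⁰ ⊗ ρ_B⁰`, which is `S[ρ_A⁰] + S[ρ_B⁰]`. The Gibbs entropy is
subadditive: Gibbs' inequality `∫ ρ log ρ ≥ ∫ ρ log q` for the product `q = ρ_A¹ ⊗ ρ_B¹` of the
marginals gives `S[ρ₁] ≤ S[ρ_A¹] + S[ρ_B¹]`, because the cross entropy `∫ ρ₁ log q` splits into
the entropies of the two marginals.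
-/

open MeasureTheory Real

section Development

variable {Ω Ω' X Y : Type*} [MeasurableSpace Ω] [MeasurableSpace Ω'] [MeasurableSpace X]
  [MeasurableSpace Y]

noncomputable def gibbsEntropy (μ : Measure Ω) (ρ : Ω → ℝ) : ℝ := -∫ ω, ρ ω * log (ρ ω) ∂μ

structure IsProbDensity (μ : Measure Ω) (ρ : Ω → ℝ) : Prop where
  nonneg : ∀ ω, 0 ≤ ρ ω
  integral_eq_one : ∫ ω, ρ ω ∂μ = 1

noncomputable def fstMarginal (ν : Measure Y) (ρ : X × Y → ℝ) (x : X) : ℝ := ∫ y, ρ (x, y) ∂ν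

/-- Definitionally `fstMarginal μ (ρ ∘ Prod.swap)`: all its properties are transported along
`Prod.swap`. -/
noncomputable def sndMarginal (μ : Measure X) (ρ : X × Y → ℝ) (y : Y) : ℝ := ∫ x, ρ (x, y) ∂μ

namespace IsProbDensity

variable {μ : Measure Ω} {ρ : Ω → ℝ}

lemma integrable (h : IsProbDensity μ ρ) : Integrable ρ μ := by
  by_contra hρ
  simpa [integral_undef hρ] using h.integral_eq_one

lemma comp_measurePreserving {μ' : Measure Ω'} {Φ : Ω' → Ω} (h : IsProbDensity μ ρ)
    (hΦ : MeasurePreserving Φ μ' μ) (hΦe : MeasurableEmbedding Φ) :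
    IsProbDensity μ' (ρ ∘ Φ) :=
  ⟨fun _ => h.nonneg _, (hΦ.integral_comp hΦe ρ).trans h.integral_eq_one⟩

end IsProbDensity

lemma MeasureTheory.MeasurePreserving.gibbsEntropy_comp {μ : Measure Ω} {μ' : Measure Ω'}
    {Φ : Ω' → Ω} (hΦ : MeasurePreserving Φ μ' μ) (hΦe : MeasurableEmbedding Φ) (ρ : Ω → ℝ) :
    gibbsEntropy μ' (ρ ∘ Φ) = gibbsEntropy μ ρ :=
  congrArg Neg.neg (hΦ.integral_comp hΦe fun ω => ρ ω * log (ρ ω))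

lemma mul_log_sub_mul_log_le {p q : ℝ} (hp : 0 ≤ p) (hq : 0 ≤ q) (hpq : q = 0 → p = 0) :
    p * log q - p * log p ≤ q - p := by
  rcases hp.eq_or_lt with rfl | hp
  · simpa using hq
  have hq : 0 < q := hq.lt_of_ne fun h => hp.ne' (hpq h.symm)
  calc p * log q - p * log p = p * log (q / p) := by rw [log_div hq.ne' hp.ne', mul_sub]
    _ ≤ p * (q / p - 1) := mul_le_mul_of_nonneg_left (log_le_sub_one_of_pos (by positivity)) hp.le
    _ = q - p := by field_simp

theorem IsProbDensity.gibbsEntropy_le {μ : Measure Ω} {p q : Ω → ℝ} (hp : IsProbDensity μ p)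
    (hq : IsProbDensity μ q) (hpq : ∀ᵐ ω ∂μ, q ω = 0 → p ω = 0)
    (hplp : Integrable (fun ω => p ω * log (p ω)) μ)
    (hplq : Integrable (fun ω => p ω * log (q ω)) μ) :
    gibbsEntropy μ p ≤ -∫ ω, p ω * log (q ω) ∂μ := by
  have key : ∫ ω, (p ω * log (q ω) - p ω * log (p ω)) ∂μ ≤ ∫ ω, (q ω - p ω) ∂μ :=
    integral_mono_ae (hplq.sub hplp) (hq.integrable.sub hp.integrable) <| by
      filter_upwards [hpq] with ω hω using mul_log_sub_mul_log_le (hp.nonneg ω) (hq.nonneg ω) hω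
  rw [integral_sub hplq hplp, integral_sub hq.integrable hp.integrable, hp.integral_eq_one,
    hq.integral_eq_one] at key
  rw [gibbsEntropy]
  linarith

lemma mul_mul_log_mul (a b : ℝ) : a * b * log (a * b) = a * log a * b + a * (b * log b) := by
  rcases eq_or_ne a 0 with rfl | ha
  · simp
  rcases eq_or_ne b 0 with rfl | hb
  · simp
  rw [log_mul ha hb]
  ring

section Product

variable {μ : Measure X} {ν : Measure Y} {f : X → ℝ} {g : Y → ℝ}

lemma IsProbDensity.prod [SFinite μ] [SFinite ν] (hf : IsProbDensity μ f)
    (hg : IsProbDensity ν g) :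
    IsProbDensity (μ.prod ν) fun z => f z.1 * g z.2 :=
  ⟨fun z => mul_nonneg (hf.nonneg z.1) (hg.nonneg z.2), by
    rw [integral_prod_mul, hf.integral_eq_one, hg.integral_eq_one, one_mul]⟩

lemma integrable_mul_log_prod (hf : Integrable f μ) (hg : Integrable g ν)
    (hfl : Integrable (fun x => f x * log (f x)) μ)
    (hgl : Integrable (fun y => g y * log (g y)) ν) :
    Integrable (fun z => f z.1 * g z.2 * log (f z.1 * g z.2)) (μ.prod ν) := by
  simp_rw [mul_mul_log_mul]
  exact (hfl.mul_prod hg).add (hf.mul_prod hgl)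

lemma gibbsEntropy_prod [SFinite μ] [SFinite ν] (hf : IsProbDensity μ f) (hg : IsProbDensity ν g)
    (hfl : Integrable (fun x => f x * log (f x)) μ)
    (hgl : Integrable (fun y => g y * log (g y)) ν) :
    gibbsEntropy (μ.prod ν) (fun z => f z.1 * g z.2) = gibbsEntropy μ f + gibbsEntropy ν g := by
  simp_rw [gibbsEntropy, mul_mul_log_mul]
  rw [integral_add (hfl.mul_prod hg.integrable) (hf.integrable.mul_prod hgl),
    integral_prod_mul (fun x => f x * log (f x)) g, integral_prod_mul f fun y => g y * log (g y),
    hf.integral_eq_one, hg.integral_eq_one]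
  ring

end Product

section Marginal

variable {μ : Measure X} {ν : Measure Y} [SFinite μ] [SFinite ν] {ρ : X × Y → ℝ}

lemma IsProbDensity.swap (h : IsProbDensity (μ.prod ν) ρ) :
    IsProbDensity (ν.prod μ) (ρ ∘ Prod.swap) :=
  ⟨fun _ => h.nonneg _, (integral_prod_swap ρ).trans h.integral_eq_one⟩

lemma IsProbDensity.fstMarginal (h : IsProbDensity (μ.prod ν) ρ) :
    IsProbDensity μ (fstMarginal ν ρ) :=
  ⟨fun _ => integral_nonneg fun _ => h.nonneg _,
    (integral_prod ρ h.integrable).symm.trans h.integral_eq_one⟩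

lemma IsProbDensity.sndMarginal (h : IsProbDensity (μ.prod ν) ρ) :
    IsProbDensity ν (sndMarginal μ ρ) :=
  h.swap.fstMarginal

lemma ae_eq_zero_of_fstMarginal_eq_zero (hρm : Measurable ρ) (hρ0 : ∀ z, 0 ≤ ρ z)
    (hρi : Integrable ρ (μ.prod ν)) :
    ∀ᵐ z ∂μ.prod ν, fstMarginal ν ρ z.1 = 0 → ρ z = 0 := by
  have hM : Measurable (fstMarginal ν ρ) := hρm.stronglyMeasurable.integral_prod_right'.measurable
  have hset : MeasurableSet {z : X × Y | fstMarginal ν ρ z.1 = 0 → ρ z = 0} := by measurability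
  rw [Measure.ae_prod_iff_ae_ae hset]
  filter_upwards [hρi.prod_right_ae] with x hx
  rw [Filter.eventually_imp_distrib_left]
  exact (integral_eq_zero_iff_of_nonneg (fun y => hρ0 (x, y)) hx).mp

lemma ae_eq_zero_of_sndMarginal_eq_zero (hρm : Measurable ρ) (hρ0 : ∀ z, 0 ≤ ρ z)
    (hρi : Integrable ρ (μ.prod ν)) :
    ∀ᵐ z ∂μ.prod ν, sndMarginal μ ρ z.2 = 0 → ρ z = 0 :=
  Measure.measurePreserving_swap.quasiMeasurePreserving.ae <|
    ae_eq_zero_of_fstMarginal_eq_zero (hρm.comp measurable_swap) (fun _ => hρ0 _) hρi.swap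

lemma integrable_mul_log_fstMarginal (hρ0 : ∀ z, 0 ≤ ρ z) (hρi : Integrable ρ (μ.prod ν))
    (hM : Integrable (fun x => fstMarginal ν ρ x * log (fstMarginal ν ρ x)) μ) :
    Integrable (fun z => ρ z * log (fstMarginal ν ρ z.1)) (μ.prod ν) := by
  have hlogM : AEStronglyMeasurable (fun x => log (fstMarginal ν ρ x)) μ :=
    (measurable_log.comp_aemeasurable hρi.integral_prod_left.aemeasurable).aestronglyMeasurable
  have hmeas : AEStronglyMeasurable (fun z => ρ z * log (fstMarginal ν ρ z.1)) (μ.prod ν) :=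
    hρi.aestronglyMeasurable.mul hlogM.comp_fst
  rw [integrable_prod_iff hmeas]
  refine ⟨?_, hM.norm.congr (Filter.Eventually.of_forall fun x => ?_)⟩
  · filter_upwards [hρi.prod_right_ae] with x hx using hx.mul_const _
  · simp_rw [norm_mul, Real.norm_of_nonneg (hρ0 _), integral_mul_const]
    congr 1
    exact Real.norm_of_nonneg (integral_nonneg fun y => hρ0 (x, y))

lemma integrable_mul_log_sndMarginal (hρ0 : ∀ z, 0 ≤ ρ z) (hρi : Integrable ρ (μ.prod ν))
    (hM : Integrable (fun y => sndMarginal μ ρ y * log (sndMarginal μ ρ y)) ν) :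
    Integrable (fun z => ρ z * log (sndMarginal μ ρ z.2)) (μ.prod ν) :=
  (integrable_mul_log_fstMarginal (fun _ => hρ0 _) hρi.swap hM).swap

lemma integral_mul_log_fstMarginal
    (hi : Integrable (fun z => ρ z * log (fstMarginal ν ρ z.1)) (μ.prod ν)) :
    ∫ z, ρ z * log (fstMarginal ν ρ z.1) ∂μ.prod ν =
      ∫ x, fstMarginal ν ρ x * log (fstMarginal ν ρ x) ∂μ := by
  simp_rw [integral_prod _ hi, integral_mul_const]
  rfl

lemma integral_mul_log_sndMarginal
    (hi : Integrable (fun z => ρ z * log (sndMarginal μ ρ z.2)) (μ.prod ν)) :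
    ∫ z, ρ z * log (sndMarginal μ ρ z.2) ∂μ.prod ν =
      ∫ y, sndMarginal μ ρ y * log (sndMarginal μ ρ y) ∂ν := by
  rw [← integral_prod_swap]
  exact integral_mul_log_fstMarginal (ρ := ρ ∘ Prod.swap) hi.swap

theorem gibbsEntropy_le_add_marginals (h : IsProbDensity (μ.prod ν) ρ) (hρm : Measurable ρ)
    (hent : Integrable (fun z => ρ z * log (ρ z)) (μ.prod ν))
    (hentA : Integrable (fun x => fstMarginal ν ρ x * log (fstMarginal ν ρ x)) μ)
    (hentB : Integrable (fun y => sndMarginal μ ρ y * log (sndMarginal μ ρ y)) ν) :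
    gibbsEntropy (μ.prod ν) ρ ≤
      gibbsEntropy μ (fstMarginal ν ρ) + gibbsEntropy ν (sndMarginal μ ρ) := by
  have hA := integrable_mul_log_fstMarginal h.nonneg h.integrable hentA
  have hB := integrable_mul_log_sndMarginal h.nonneg h.integrable hentB
  have hA0 := ae_eq_zero_of_fstMarginal_eq_zero hρm h.nonneg h.integrable
  have hB0 := ae_eq_zero_of_sndMarginal_eq_zero hρm h.nonneg h.integrable
  -- `log (a * b) = log a + log b` fails only where a marginal vanishes, and there `ρ = 0` a.e.
  have hsplit : (fun z => ρ z * log (fstMarginal ν ρ z.1 * sndMarginal μ ρ z.2)) =ᵐ[μ.prod ν]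
      fun z => ρ z * log (fstMarginal ν ρ z.1) + ρ z * log (sndMarginal μ ρ z.2) := by
    filter_upwards [hA0, hB0] with z hzA hzB
    rcases eq_or_ne (fstMarginal ν ρ z.1) 0 with hA | hA
    · simp [hzA hA]
    rcases eq_or_ne (sndMarginal μ ρ z.2) 0 with hB | hB
    · simp [hzB hB]
    rw [log_mul hA hB, mul_add]
  have hpq : ∀ᵐ z ∂μ.prod ν, fstMarginal ν ρ z.1 * sndMarginal μ ρ z.2 = 0 → ρ z = 0 := by
    filter_upwards [hA0, hB0] with z hzA hzB hz using (mul_eq_zero.mp hz).elim hzA hzB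
  have gibbs := h.gibbsEntropy_le (h.fstMarginal.prod h.sndMarginal) hpq hent
    ((hA.add hB).congr hsplit.symm)
  rw [integral_congr_ae hsplit, integral_add hA hB, integral_mul_log_fstMarginal hA,
    integral_mul_log_sndMarginal hB] at gibbs
  unfold gibbsEntropy at gibbs ⊢
  linarith

end Marginal

end Development

theorem marginal_entropy_sum_nondecreasing_general
    {X Y : Type*} [MeasurableSpace X] [MeasurableSpace Y]
    (μ : Measure X) (ν : Measure Y) [SigmaFinite μ] [SigmaFinite ν]
    (ρA0 : X → ℝ) (hρA0m : Measurable ρA0) (hρA00 : ∀ x, 0 ≤ ρA0 x)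
    (hρA01 : ∫ x, ρA0 x ∂μ = 1)
    (hentA0 : Integrable (fun x => ρA0 x * log (ρA0 x)) μ)
    (ρB0 : Y → ℝ) (hρB0m : Measurable ρB0) (hρB00 : ∀ y, 0 ≤ ρB0 y)
    (hρB01 : ∫ y, ρB0 y ∂ν = 1)
    (hentB0 : Integrable (fun y => ρB0 y * log (ρB0 y)) ν)
    (Φ : X × Y ≃ᵐ X × Y)
    (hΦinv : MeasurePreserving Φ.symm (μ.prod ν) (μ.prod ν))
    (ρ1 : X × Y → ℝ)
    (hρ1def : ρ1 = (fun p : X × Y => ρA0 p.1 * ρB0 p.2) ∘ Φ.symm)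
    (ρA1 : X → ℝ) (hρA1 : ∀ x, ρA1 x = ∫ y, ρ1 (x, y) ∂ν)
    (ρB1 : Y → ℝ) (hρB1 : ∀ y, ρB1 y = ∫ x, ρ1 (x, y) ∂μ)
    (hentA1 : Integrable (fun x => ρA1 x * log (ρA1 x)) μ)
    (hentB1 : Integrable (fun y => ρB1 y * log (ρB1 y)) ν) :
    -(∫ x, ρA1 x * log (ρA1 x) ∂μ) + -(∫ y, ρB1 y * log (ρB1 y) ∂ν) ≥
      -(∫ x, ρA0 x * log (ρA0 x) ∂μ) + -(∫ y, ρB0 y * log (ρB0 y) ∂ν) := by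
  obtain rfl : ρA1 = fstMarginal ν ρ1 := funext hρA1
  obtain rfl : ρB1 = sndMarginal μ ρ1 := funext hρB1
  set ρ0 : X × Y → ℝ := fun p => ρA0 p.1 * ρB0 p.2
  subst hρ1def
  have hA0 : IsProbDensity μ ρA0 := ⟨hρA00, hρA01⟩
  have hB0 : IsProbDensity ν ρB0 := ⟨hρB00, hρB01⟩
  have hΦe := Φ.symm.measurableEmbedding
  have hρ1 := (hA0.prod hB0).comp_measurePreserving hΦinv hΦe
  have hρ1m : Measurable (ρ0 ∘ Φ.symm) :=
    ((hρA0m.comp measurable_fst).mul (hρB0m.comp measurable_snd)).comp Φ.symm.measurable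
  have hent1 := (hΦinv.integrable_comp_emb hΦe).mpr <|
    integrable_mul_log_prod hA0.integrable hB0.integrable hentA0 hentB0
  have liouville :
      gibbsEntropy (μ.prod ν) (ρ0 ∘ Φ.symm) = gibbsEntropy μ ρA0 + gibbsEntropy ν ρB0 := by
    rw [hΦinv.gibbsEntropy_comp hΦe, gibbsEntropy_prod hA0 hB0 hentA0 hentB0]
  have subadditivity := gibbsEntropy_le_add_marginals hρ1 hρ1m hent1 hentA1 hentB1
  rw [liouville] at subadditivity
  exact subadditivity

/-- Measure-preserving evolution of an initially independent joint density
cannot decrease the sum of the marginal Gibbs entropies: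
`S[ρ_A¹] + S[ρ_B¹] ≥ S[ρ_A⁰] + S[ρ_B⁰]`. -/
theorem marginal_entropy_sum_nondecreasing
    {X Y : Type*} [MeasurableSpace X] [MeasurableSpace Y]
    (μ : Measure X) (ν : Measure Y) [SigmaFinite μ] [SigmaFinite ν]
    (ρA0 : X → ℝ) (hρA0m : Measurable ρA0) (hρA00 : ∀ x, 0 ≤ ρA0 x)
    (hρA01 : ∫ x, ρA0 x ∂μ = 1)
    (hentA0 : Integrable (fun x => ρA0 x * log (ρA0 x)) μ)
    (ρB0 : Y → ℝ) (hρB0m : Measurable ρB0) (hρB00 : ∀ y, 0 ≤ ρB0 y)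
    (hρB01 : ∫ y, ρB0 y ∂ν = 1)
    (hentB0 : Integrable (fun y => ρB0 y * log (ρB0 y)) ν)
    (Φ : X × Y ≃ᵐ X × Y)
    (hΦ : MeasurePreserving Φ (μ.prod ν) (μ.prod ν))
    (hΦinv : MeasurePreserving Φ.symm (μ.prod ν) (μ.prod ν))
    (ρ1 : X × Y → ℝ)
    (hρ1def : ρ1 = (fun p : X × Y => ρA0 p.1 * ρB0 p.2) ∘ Φ.symm)
    (ρA1 : X → ℝ) (hρA1 : ∀ x, ρA1 x = ∫ y, ρ1 (x, y) ∂ν)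
    (ρB1 : Y → ℝ) (hρB1 : ∀ y, ρB1 y = ∫ x, ρ1 (x, y) ∂μ)
    (hentA1 : Integrable (fun x => ρA1 x * log (ρA1 x)) μ)
    (hentB1 : Integrable (fun y => ρB1 y * log (ρB1 y)) ν) :
    -(∫ x, ρA1 x * log (ρA1 x) ∂μ) + -(∫ y, ρB1 y * log (ρB1 y) ∂ν) ≥
      -(∫ x, ρA0 x * log (ρA0 x) ∂μ) + -(∫ y, ρB0 y * log (ρB0 y) ∂ν) :=
  marginal_entropy_sum_nondecreasing_general μ ν ρA0 hρA0m hρA00 hρA01 hentA0 ρB0 hρB0m hρB00 hρB01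
    hentB0 Φ hΦinv ρ1 hρ1def ρA1 hρA1 ρB1 hρB1 hentA1 hentB1
end

section
/- Let (X, μ) and (Y, ν) be σ-finite measure spaces, H_B : Y → ℝ measurable, β > 0 and T = 1/β, with Z = ∫ exp(−β·H_B) dν satisfying 0 < Z < ∞; let τ = Z⁻¹·exp(−β·H_B) be the canonical density on Y, and assume H_B·τ and τ·log τ are ν-integrable. Let ρ_A⁰ be a probability density on (X, μ) with ρ_A⁰·log ρ_A⁰ integrable, let the initial joint density be ρ₀(x,y) = ρ_A⁰(x)·τ(y), let Φ : X × Y → X × Y be a measurable bijection with measurable inverse such that both Φ and Φ⁻¹ preserve μ ⊗ ν, and let ρ₁ = ρ₀ ∘ Φ⁻¹ with marginals ρ_A¹, ρ_B¹ such that ρ_A¹·log ρ_A¹, ρ_B¹·log ρ_B¹ and H_B·ρ_B¹ are integrable. Define the expected heat received by system A as ⟨Q⟩ = ∫ H_B·τ dν − ∫ H_B·ρ_B¹ dν. Then ⟨Q⟩/T ≤ S[ρ_A¹] − S[ρ_A⁰]. -/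
open MeasureTheory Real

lemma gibbs_aux {α : Type*} [MeasurableSpace α] (m : Measure α)
    (f g : α → ℝ) (hf : Integrable f m) (hg : Integrable g m)
    (hff : Integrable (fun a => f a * log (f a)) m)
    (hfg : Integrable (fun a => f a * log (g a)) m)
    (hf0 : ∀ᵐ a ∂m, 0 ≤ f a) (hg0 : ∀ᵐ a ∂m, 0 ≤ g a)
    (hsupp : ∀ᵐ a ∂m, g a = 0 → f a = 0)
    (heq : ∫ a, f a ∂m = ∫ a, g a ∂m) :
    ∫ a, f a * log (g a) ∂m ≤ ∫ a, f a * log (f a) ∂m := by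
  have key : ∀ᵐ a ∂m, f a - g a ≤ f a * log (f a) - f a * log (g a) := by
    filter_upwards [hf0, hg0, hsupp] with a h0 h1 h2
    rcases eq_or_lt_of_le h0 with hfa | hfa
    · rw [← hfa]; simp; linarith
    · have hga : 0 < g a := by
        rcases eq_or_lt_of_le h1 with h | h
        · exact absurd (h2 h.symm) (ne_of_gt hfa)
        · exact h
      have hlog := Real.log_le_sub_one_of_pos (show (0:ℝ) < g a / f a by positivity)
      rw [Real.log_div (ne_of_gt hga) (ne_of_gt hfa)] at hlog
      have h3 : f a * (log (g a) - log (f a)) ≤ f a * (g a / f a - 1) :=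
        mul_le_mul_of_nonneg_left hlog (le_of_lt hfa)
      have h4 : f a * (g a / f a) = g a := by field_simp
      nlinarith
  have h := integral_mono_ae (hf.sub hg) (hff.sub hfg) key
  simp only [Pi.sub_apply] at h
  rw [integral_sub hf hg, integral_sub hff hfg] at h
  linarith

/-- Single-reservoir form of the Fundamental Theorem of Statistical
Thermo-dynamics (classical case): `⟨Q⟩/T ≤ S[ρ_A¹] - S[ρ_A⁰]`. -/
theorem fundamental_theorem_single_reservoir
    {X Y : Type*} [MeasurableSpace X] [MeasurableSpace Y]
    (μ : Measure X) (ν : Measure Y) [SigmaFinite μ] [SigmaFinite ν]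
    (H_B : Y → ℝ) (hHB : Measurable H_B) (β : ℝ) (hβ : 0 < β)
    (T : ℝ) (hT : T = 1 / β)
    (hZint : Integrable (fun y => exp (-β * H_B y)) ν)
    (Z : ℝ) (hZdef : Z = ∫ y, exp (-β * H_B y) ∂ν) (hZpos : 0 < Z)
    (τ : Y → ℝ) (hτdef : ∀ y, τ y = Z⁻¹ * exp (-β * H_B y))
    (hHτ : Integrable (fun y => H_B y * τ y) ν)
    (hentτ : Integrable (fun y => τ y * log (τ y)) ν)
    (ρA0 : X → ℝ) (hρA0m : Measurable ρA0) (hρA00 : ∀ x, 0 ≤ ρA0 x)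
    (hρA01 : ∫ x, ρA0 x ∂μ = 1)
    (hentA0 : Integrable (fun x => ρA0 x * log (ρA0 x)) μ)
    (ρ0 : X × Y → ℝ) (hρ0def : ∀ p : X × Y, ρ0 p = ρA0 p.1 * τ p.2)
    (Φ : X × Y ≃ᵐ X × Y)
    (hΦ : MeasurePreserving Φ (μ.prod ν) (μ.prod ν))
    (hΦinv : MeasurePreserving Φ.symm (μ.prod ν) (μ.prod ν))
    (ρ1 : X × Y → ℝ) (hρ1def : ρ1 = ρ0 ∘ Φ.symm)
    (ρA1 : X → ℝ) (hρA1 : ∀ x, ρA1 x = ∫ y, ρ1 (x, y) ∂ν)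
    (ρB1 : Y → ℝ) (hρB1 : ∀ y, ρB1 y = ∫ x, ρ1 (x, y) ∂μ)
    (hentA1 : Integrable (fun x => ρA1 x * log (ρA1 x)) μ)
    (hentB1 : Integrable (fun y => ρB1 y * log (ρB1 y)) ν)
    (hHρB1 : Integrable (fun y => H_B y * ρB1 y) ν)
    (Q : ℝ) (hQdef : Q = (∫ y, H_B y * τ y ∂ν) - ∫ y, H_B y * ρB1 y ∂ν) :
    Q / T ≤ -(∫ x, ρA1 x * log (ρA1 x) ∂μ) - -(∫ x, ρA0 x * log (ρA0 x) ∂μ) := by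
  -- basic facts about τ
  have hτE : τ = fun y => Z⁻¹ * exp (-β * H_B y) := funext hτdef
  have hτpos : ∀ y, 0 < τ y := fun y => by rw [hτdef]; positivity
  have hτm : Measurable τ := by
    rw [hτE]; exact measurable_const.mul (hHB.const_mul (-β)).exp
  have hτint : Integrable τ ν := by rw [hτE]; exact hZint.const_mul _
  have hτ1 : ∫ y, τ y ∂ν = 1 := by
    simp only [hτdef]
    rw [integral_const_mul, ← hZdef, inv_mul_cancel₀ (ne_of_gt hZpos)]
  -- basic facts about ρA0, ρ0, ρ1
  have hρA0int : Integrable ρA0 μ := by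
    by_contra h
    rw [integral_undef h] at hρA01
    norm_num at hρA01
  have hρ0E : ρ0 = fun p : X × Y => ρA0 p.1 * τ p.2 := funext hρ0def
  have hρ0m : Measurable ρ0 := by
    rw [hρ0E]; exact (hρA0m.comp measurable_fst).mul (hτm.comp measurable_snd)
  have hρ0nn : ∀ p, 0 ≤ ρ0 p := fun p => by
    rw [hρ0def]; exact mul_nonneg (hρA00 _) (hτpos _).le
  have hρ0int : Integrable ρ0 (μ.prod ν) := by
    rw [hρ0E]; exact hρA0int.mul_prod hτint
  have hρ01 : ∫ p, ρ0 p ∂(μ.prod ν) = 1 := by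
    rw [hρ0E, integral_prod_mul, hρA01, hτ1]; norm_num
  have hρ1m : Measurable ρ1 := by rw [hρ1def]; exact hρ0m.comp Φ.symm.measurable
  have hρ1nn : ∀ p, 0 ≤ ρ1 p := fun p => by rw [hρ1def]; exact hρ0nn _
  have hρ1int : Integrable ρ1 (μ.prod ν) := by
    rw [hρ1def]
    exact (hΦinv.integrable_comp hρ0int.aestronglyMeasurable).mpr hρ0int
  have hρ11 : ∫ p, ρ1 p ∂(μ.prod ν) = 1 := by
    rw [hρ1def]
    show ∫ p, ρ0 (Φ.symm p) ∂(μ.prod ν) = 1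
    rw [hΦinv.integral_comp' ρ0]
    exact hρ01
  -- marginals
  have hρA1nn : ∀ x, 0 ≤ ρA1 x := fun x => by
    rw [hρA1]; exact integral_nonneg fun y => hρ1nn _
  have hρB1nn : ∀ y, 0 ≤ ρB1 y := fun y => by
    rw [hρB1]; exact integral_nonneg fun x => hρ1nn _
  have hρA1E : ρA1 = fun x => ∫ y, ρ1 (x, y) ∂ν := funext hρA1
  have hρB1E : ρB1 = fun y => ∫ x, ρ1 (x, y) ∂μ := funext hρB1
  have hρA1m : Measurable ρA1 := by
    rw [hρA1E]
    exact hρ1m.stronglyMeasurable.integral_prod_right'.measurable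
  have hρB1m : Measurable ρB1 := by
    rw [hρB1E]
    exact hρ1m.stronglyMeasurable.integral_prod_left'.measurable
  have hρA1int : Integrable ρA1 μ := by rw [hρA1E]; exact hρ1int.integral_prod_left
  have hρB1int : Integrable ρB1 ν := by rw [hρB1E]; exact hρ1int.integral_prod_right
  have hρA11 : ∫ x, ρA1 x ∂μ = 1 := by
    rw [hρA1E, ← integral_prod ρ1 hρ1int]; exact hρ11
  have hρB11 : ∫ y, ρB1 y ∂ν = 1 := by
    rw [hρB1E, ← integral_prod_symm ρ1 hρ1int]; exact hρ11
  -- entropy of τ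
  have hlogτ : ∀ y, log (τ y) = -log Z - β * H_B y := fun y => by
    rw [hτdef, Real.log_mul (by positivity) (exp_pos _).ne', Real.log_inv,
      Real.log_exp]
    ring
  have hτlogτE : (fun y => τ y * log (τ y))
      = fun y => (-log Z) * τ y + (-β) * (H_B y * τ y) := by
    funext y; rw [hlogτ]; ring
  have hSτ : ∫ y, τ y * log (τ y) ∂ν
      = -log Z - β * ∫ y, H_B y * τ y ∂ν := by
    rw [hτlogτE, integral_add (hτint.const_mul _) (hHτ.const_mul _),
      integral_const_mul, integral_const_mul, hτ1]
    ring
  -- Gibbs inequality for ρB1 against τ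
  have hρB1logτE : (fun y => ρB1 y * log (τ y))
      = fun y => (-log Z) * ρB1 y + (-β) * (H_B y * ρB1 y) := by
    funext y; rw [hlogτ]; ring
  have hρB1logτint : Integrable (fun y => ρB1 y * log (τ y)) ν := by
    rw [hρB1logτE]; exact (hρB1int.const_mul _).add (hHρB1.const_mul _)
  have hρB1logτval : ∫ y, ρB1 y * log (τ y) ∂ν
      = -log Z - β * ∫ y, H_B y * ρB1 y ∂ν := by
    rw [hρB1logτE, integral_add (hρB1int.const_mul _) (hHρB1.const_mul _),
      integral_const_mul, integral_const_mul, hρB11]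
    ring
  have hgibbsB : ∫ y, ρB1 y * log (τ y) ∂ν ≤ ∫ y, ρB1 y * log (ρB1 y) ∂ν :=
    gibbs_aux ν ρB1 τ hρB1int hτint hentB1 hρB1logτint
      (Filter.Eventually.of_forall hρB1nn)
      (Filter.Eventually.of_forall fun y => (hτpos y).le)
      (Filter.Eventually.of_forall fun y h => absurd h (ne_of_gt (hτpos y)))
      (hρB11.trans hτ1.symm)
  -- entropy of ρ1 equals entropy of ρ0 equals S[ρA0] + S[τ]
  have hρ0logρ0E : (fun p : X × Y => ρ0 p * log (ρ0 p))
      = fun p : X × Y => (ρA0 p.1 * log (ρA0 p.1)) * τ p.2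
        + ρA0 p.1 * (τ p.2 * log (τ p.2)) := by
    funext p
    rw [hρ0def]
    rcases eq_or_lt_of_le (hρA00 p.1) with h | h
    · rw [← h]; ring_nf
    · rw [Real.log_mul (ne_of_gt h) (ne_of_gt (hτpos p.2))]; ring
  have hρ0logρ0int : Integrable (fun p : X × Y => ρ0 p * log (ρ0 p)) (μ.prod ν) := by
    rw [hρ0logρ0E]; exact (hentA0.mul_prod hτint).add (hρA0int.mul_prod hentτ)
  have hρ1logρ1E : (fun p : X × Y => ρ1 p * log (ρ1 p))
      = (fun p : X × Y => ρ0 p * log (ρ0 p)) ∘ Φ.symm := by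
    funext p; rw [hρ1def]; rfl
  have hρ1logρ1int : Integrable (fun p : X × Y => ρ1 p * log (ρ1 p)) (μ.prod ν) := by
    rw [hρ1logρ1E]
    exact (hΦinv.integrable_comp hρ0logρ0int.aestronglyMeasurable).mpr hρ0logρ0int
  have hL : ∫ p, ρ1 p * log (ρ1 p) ∂(μ.prod ν)
      = (∫ x, ρA0 x * log (ρA0 x) ∂μ) + ∫ y, τ y * log (τ y) ∂ν := by
    rw [hρ1logρ1E]
    rw [show ∫ p, ((fun p : X × Y => ρ0 p * log (ρ0 p)) ∘ Φ.symm) p ∂(μ.prod ν)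
        = ∫ p, ρ0 p * log (ρ0 p) ∂(μ.prod ν) from
      hΦinv.integral_comp' fun p => ρ0 p * log (ρ0 p)]
    rw [hρ0logρ0E, integral_add (hentA0.mul_prod hτint) (hρA0int.mul_prod hentτ),
      integral_prod_mul (fun x => ρA0 x * log (ρA0 x)) τ,
      integral_prod_mul ρA0 (fun y => τ y * log (τ y)), hτ1, hρA01]
    ring
  -- support conditions
  have hsuppA : ∀ᵐ p ∂(μ.prod ν), ρA1 p.1 = 0 → ρ1 p = 0 := by
    set A : Set X := ρA1 ⁻¹' {0} with hA
    have hAm : MeasurableSet A := hρA1m (measurableSet_singleton 0)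
    have hprodA : (μ.restrict A).prod ν = (μ.prod ν).restrict (A ×ˢ Set.univ) := by
      rw [← Measure.prod_restrict, Measure.restrict_univ]
    have hint : Integrable ρ1 ((μ.restrict A).prod ν) := by
      rw [hprodA]; exact hρ1int.restrict
    have hres : ∫ p, ρ1 p ∂((μ.restrict A).prod ν) = 0 := by
      rw [integral_prod ρ1 hint]
      simp_rw [← hρA1]
      rw [setIntegral_congr_fun hAm (fun x hx => hx), integral_zero]
    have hint' : Integrable ρ1 ((μ.prod ν).restrict (A ×ˢ Set.univ)) :=
      hρ1int.restrict
    have hres' : ∫ p, ρ1 p ∂((μ.prod ν).restrict (A ×ˢ Set.univ)) = 0 := by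
      rw [← hprodA]; exact hres
    have h0 := (integral_eq_zero_iff_of_nonneg_ae
      (Filter.Eventually.of_forall hρ1nn) hint').mp hres'
    have h1 : ∀ᵐ p ∂(μ.prod ν), p ∈ A ×ˢ (Set.univ : Set Y) → ρ1 p = 0 :=
      (ae_restrict_iff' (hAm.prod MeasurableSet.univ)).mp h0
    filter_upwards [h1] with p hp h
    exact hp ⟨h, trivial⟩
  have hsuppB : ∀ᵐ p ∂(μ.prod ν), ρB1 p.2 = 0 → ρ1 p = 0 := by
    set B : Set Y := ρB1 ⁻¹' {0} with hB
    have hBm : MeasurableSet B := hρB1m (measurableSet_singleton 0)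
    have hprodB : μ.prod (ν.restrict B) = (μ.prod ν).restrict (Set.univ ×ˢ B) := by
      rw [← Measure.prod_restrict, Measure.restrict_univ]
    have hint : Integrable ρ1 (μ.prod (ν.restrict B)) := by
      rw [hprodB]; exact hρ1int.restrict
    have hres : ∫ p, ρ1 p ∂(μ.prod (ν.restrict B)) = 0 := by
      rw [integral_prod_symm ρ1 hint]
      simp_rw [← hρB1]
      rw [setIntegral_congr_fun hBm (fun y hy => hy), integral_zero]
    have hint' : Integrable ρ1 ((μ.prod ν).restrict (Set.univ ×ˢ B)) :=
      hρ1int.restrict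
    have hres' : ∫ p, ρ1 p ∂((μ.prod ν).restrict (Set.univ ×ˢ B)) = 0 := by
      rw [← hprodB]; exact hres
    have h0 := (integral_eq_zero_iff_of_nonneg_ae
      (Filter.Eventually.of_forall hρ1nn) hint').mp hres'
    have h1 : ∀ᵐ p ∂(μ.prod ν), p ∈ (Set.univ : Set X) ×ˢ B → ρ1 p = 0 :=
      (ae_restrict_iff' (MeasurableSet.univ.prod hBm)).mp h0
    filter_upwards [h1] with p hp h
    exact hp ⟨trivial, h⟩
  -- integrability of the two marginal-log pieces
  have piece1int : Integrable (fun p : X × Y => ρ1 p * log (ρA1 p.1)) (μ.prod ν) := by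
    refine (integrable_prod_iff ?_).mpr ⟨?_, ?_⟩
    · exact (hρ1m.mul ((Real.measurable_log.comp hρA1m).comp
        measurable_fst)).aestronglyMeasurable
    · filter_upwards [hρ1int.prod_right_ae] with x hx
      exact hx.mul_const _
    · have hE : (fun x => ∫ y, ‖ρ1 (x, y) * log (ρA1 x)‖ ∂ν)
          = fun x => |ρA1 x * log (ρA1 x)| := by
        funext x
        simp_rw [norm_mul, Real.norm_eq_abs, abs_of_nonneg (hρ1nn _)]
        rw [integral_mul_const, ← hρA1 x, abs_mul, abs_of_nonneg (hρA1nn x)]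
      rw [hE]
      exact hentA1.abs
  have piece2int : Integrable (fun p : X × Y => ρ1 p * log (ρB1 p.2)) (μ.prod ν) := by
    refine (integrable_prod_iff' ?_).mpr ⟨?_, ?_⟩
    · exact (hρ1m.mul ((Real.measurable_log.comp hρB1m).comp
        measurable_snd)).aestronglyMeasurable
    · filter_upwards [hρ1int.prod_left_ae] with y hy
      exact hy.mul_const _
    · have hE : (fun y => ∫ x, ‖ρ1 (x, y) * log (ρB1 y)‖ ∂μ)
          = fun y => |ρB1 y * log (ρB1 y)| := by
        funext y
        simp_rw [norm_mul, Real.norm_eq_abs, abs_of_nonneg (hρ1nn _)]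
        rw [integral_mul_const, ← hρB1 y, abs_mul, abs_of_nonneg (hρB1nn y)]
      rw [hE]
      exact hentB1.abs
  have piece1val : ∫ p, ρ1 p * log (ρA1 p.1) ∂(μ.prod ν)
      = ∫ x, ρA1 x * log (ρA1 x) ∂μ := by
    rw [integral_prod _ piece1int]
    congr 1
    funext x
    show ∫ y, ρ1 (x, y) * log (ρA1 x) ∂ν = ρA1 x * log (ρA1 x)
    rw [integral_mul_const, ← hρA1 x]
  have piece2val : ∫ p, ρ1 p * log (ρB1 p.2) ∂(μ.prod ν)
      = ∫ y, ρB1 y * log (ρB1 y) ∂ν := by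
    rw [integral_prod_symm _ piece2int]
    congr 1
    funext y
    show ∫ x, ρ1 (x, y) * log (ρB1 y) ∂μ = ρB1 y * log (ρB1 y)
    rw [integral_mul_const, ← hρB1 y]
  -- the mixed logarithm splits a.e.
  have hsplit : (fun p : X × Y => ρ1 p * log (ρA1 p.1 * ρB1 p.2))
      =ᵐ[μ.prod ν] fun p : X × Y => ρ1 p * log (ρA1 p.1) + ρ1 p * log (ρB1 p.2) := by
    filter_upwards [hsuppA, hsuppB] with p h1 h2
    by_cases h : ρ1 p = 0
    · simp [h]
    · have hA0 : ρA1 p.1 ≠ 0 := fun hh => h (h1 hh)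
      have hB0 : ρB1 p.2 ≠ 0 := fun hh => h (h2 hh)
      rw [Real.log_mul hA0 hB0]
      ring
  have hfgint : Integrable (fun p : X × Y => ρ1 p * log (ρA1 p.1 * ρB1 p.2))
      (μ.prod ν) := (piece1int.add piece2int).congr hsplit.symm
  have hfgval : ∫ p, ρ1 p * log (ρA1 p.1 * ρB1 p.2) ∂(μ.prod ν)
      = (∫ x, ρA1 x * log (ρA1 x) ∂μ) + ∫ y, ρB1 y * log (ρB1 y) ∂ν := by
    rw [integral_congr_ae hsplit, integral_add piece1int piece2int,
      piece1val, piece2val]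
  -- subadditivity via Gibbs on the product space
  have hgibbsProd : ∫ p, ρ1 p * log (ρA1 p.1 * ρB1 p.2) ∂(μ.prod ν)
      ≤ ∫ p, ρ1 p * log (ρ1 p) ∂(μ.prod ν) := by
    refine gibbs_aux (μ.prod ν) ρ1 (fun p => ρA1 p.1 * ρB1 p.2) hρ1int
      (hρA1int.mul_prod hρB1int) hρ1logρ1int hfgint
      (Filter.Eventually.of_forall hρ1nn)
      (Filter.Eventually.of_forall fun p => mul_nonneg (hρA1nn _) (hρB1nn _)) ?_ ?_
    · filter_upwards [hsuppA, hsuppB] with p h1 h2 h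
      rcases mul_eq_zero.mp h with h | h
      · exact h1 h
      · exact h2 h
    · rw [hρ11, integral_prod_mul, hρA11, hρB11]; norm_num
  -- put everything together
  have hQT : Q / T = Q * β := by rw [hT]; field_simp
  rw [hQT, hQdef]
  have E1 : (∫ x, ρA1 x * log (ρA1 x) ∂μ) + ∫ y, ρB1 y * log (ρB1 y) ∂ν
      ≤ (∫ x, ρA0 x * log (ρA0 x) ∂μ) + ∫ y, τ y * log (τ y) ∂ν := by
    rw [← hfgval, ← hL]
    exact hgibbsProd
  rw [hSτ] at E1
  rw [hρB1logτval] at hgibbsB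
  linarith
end
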